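/- Let s > 0 and define F(r) := ν₂(S₀(s) ∩ B(0,r))/s², the CDF of the nearest distance from the origin to a random shifted grid of spacing s. Then F is differentiable with derivative F′(r) = 2π r/s² at every r ∈ (0, s/2), and differentiable with derivative F′(r) = 2π r/s² − (8r/s²)·arccos(s/(2r)) at every r ∈ (s/2, s/√2). In particular the nearest grid distance R_g has probability density f_{R_g}(r) = 2π r s^{−2} for 0 ≤ r ≤ s/2, f_{R_g}(r) = 2π r s^{−2} − (8r/s²) arccos(s/(2r)) for s/2 < r ≤ s/√2, and 0 otherwise. -/

import Mathlib

open MeasureTheory Real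

/-- The grid point `s·k = (s k₁, s k₂)` for `k ∈ ℤ²`. -/
noncomputable def gridPt (s : ℝ) (k : ℤ × ℤ) : EuclideanSpace ℝ (Fin 2) :=
  (WithLp.equiv 2 (Fin 2 → ℝ)).symm ![s * (k.1 : ℝ), s * (k.2 : ℝ)]

/-- The square `S₀(s) = [−s/2, s/2] × [−s/2, s/2]`. -/
def square (s : ℝ) : Set (EuclideanSpace ℝ (Fin 2)) :=
  {u | u 0 ∈ Set.Icc (-(s / 2)) (s / 2) ∧ u 1 ∈ Set.Icc (-(s / 2)) (s / 2)}

/-- The CDF `F(r) = ν₂(S₀(s) ∩ B(0,r))/s²` of the nearest grid distance. -/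
noncomputable def gridCDF (s r : ℝ) : ℝ :=
  (volume (square s ∩ Metric.closedBall (0 : EuclideanSpace ℝ (Fin 2)) r)).toReal / s ^ 2

/-- The density `f_{R_g}` of the nearest grid distance. -/
noncomputable def gridPDF (s r : ℝ) : ℝ :=
  if 0 ≤ r ∧ r ≤ s / 2 then 2 * π * r / s ^ 2
  else if s / 2 < r ∧ r ≤ s / Real.sqrt 2 then
    2 * π * r / s ^ 2 - 8 * r / s ^ 2 * Real.arccos (s / (2 * r))
  else 0

/-!
For `r ≤ s/2` the disk `B(0, r)` lies in the square, so `F(r) = πr²/s²`. For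
`s/2 ≤ r ≤ s/√2` no corner of the square lies in the disk, and slicing along the first
coordinate gives the area `∫_{-a}^{a} 2 min(a, √(r² - x²)) dx` with `a = s/2`; the primitive
`(x √(r² - x²) + r² arcsin(x/r))/2` of `√(r² - x²)` turns it into
`πr² - 4r² arccos(a/r) + 4a √(r² - a²)`, whose derivative is `2πr - 8r arccos(a/r)`.
For `u` in the square the nearest point of `sℤ² + u` to the origin is `u` itself, so
`R_g = ‖U‖` almost surely and `P(R_g ≤ r) = F(r)`. Finally `F` is continuous and has derivative
`gridPDF s` off the three break points `0, s/2, s/√2`, so `F(r) = ∫_{-∞}^r gridPDF s`.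
-/

open Set

noncomputable def euclideanFinTwoEquivProd : EuclideanSpace ℝ (Fin 2) ≃ᵐ ℝ × ℝ :=
  (MeasurableEquiv.toLp 2 (Fin 2 → ℝ)).symm.trans MeasurableEquiv.finTwoArrow

lemma measurePreserving_euclideanFinTwoEquivProd : MeasurePreserving euclideanFinTwoEquivProd :=
  (EuclideanSpace.volume_preserving_symm_measurableEquiv_toLp (Fin 2)).trans
    (volume_preserving_finTwoArrow ℝ)

lemma euclideanFinTwoEquivProd_apply (u : EuclideanSpace ℝ (Fin 2)) :
    euclideanFinTwoEquivProd u = (u 0, u 1) := rfl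

lemma norm_le_iff_sq_add_sq_le {u : EuclideanSpace ℝ (Fin 2)} {r : ℝ} (hr : 0 ≤ r) :
    ‖u‖ ≤ r ↔ u 0 ^ 2 + u 1 ^ 2 ≤ r ^ 2 := by
  rw [← sq_le_sq₀ (norm_nonneg u) hr, EuclideanSpace.real_norm_sq_eq, Fin.sum_univ_two]

lemma square_eq_preimage (s : ℝ) :
    square s = euclideanFinTwoEquivProd ⁻¹' (Icc (-(s / 2)) (s / 2) ×ˢ Icc (-(s / 2)) (s / 2)) :=
  rfl

lemma measurableSet_square (s : ℝ) : MeasurableSet (square s) :=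
  (measurableSet_Icc.prod measurableSet_Icc).preimage euclideanFinTwoEquivProd.measurable

lemma volume_square {s : ℝ} (hs : 0 ≤ s) : volume (square s) = ENNReal.ofReal (s ^ 2) := by
  rw [square_eq_preimage, measurePreserving_euclideanFinTwoEquivProd.measure_preimage
    (measurableSet_Icc.prod measurableSet_Icc).nullMeasurableSet, Measure.volume_eq_prod,
    Measure.prod_prod, Real.volume_Icc, ← ENNReal.ofReal_mul (by linarith)]
  ring_nf

lemma half_lt_div_sqrt_two {s : ℝ} (hs : 0 < s) : s / 2 < s / √2 :=
  div_lt_div_of_pos_left hs (by positivity)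
    (by nlinarith [sq_sqrt (zero_le_two (α := ℝ)), sqrt_nonneg 2])

lemma div_sqrt_two_sq (s : ℝ) : (s / √2) ^ 2 = s ^ 2 / 2 := by
  rw [div_pow, sq_sqrt zero_le_two]

lemma closedBall_subset_square {s r : ℝ} (hr : r ≤ s / 2) :
    Metric.closedBall (0 : EuclideanSpace ℝ (Fin 2)) r ⊆ square s := fun u hu ↦ by
  rw [mem_closedBall_zero_iff] at hu
  exact ⟨abs_le.1 (((PiLp.norm_apply_le u 0).trans hu).trans hr),
    abs_le.1 (((PiLp.norm_apply_le u 1).trans hu).trans hr)⟩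

lemma square_subset_closedBall {s r : ℝ} (hs : 0 ≤ s) (hr : s / √2 ≤ r) :
    square s ⊆ Metric.closedBall (0 : EuclideanSpace ℝ (Fin 2)) r := fun u ⟨h0, h1⟩ ↦ by
  have hs' : 0 ≤ s / √2 := by positivity
  rw [mem_closedBall_zero_iff, norm_le_iff_sq_add_sq_le (hs'.trans hr)]
  have hr2 : (s / √2) ^ 2 ≤ r ^ 2 := pow_le_pow_left₀ hs' hr 2
  rw [div_sqrt_two_sq] at hr2
  nlinarith [h0.1, h0.2, h1.1, h1.2]

def squareDisk (a r : ℝ) : Set (ℝ × ℝ) :=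
  {p | p.1 ∈ Icc (-a) a ∧ p.2 ∈ Icc (-a) a ∧ p.1 ^ 2 + p.2 ^ 2 ≤ r ^ 2}

lemma measurableSet_squareDisk (a r : ℝ) : MeasurableSet (squareDisk a r) :=
  (measurableSet_Icc.preimage measurable_fst).inter
    ((measurableSet_Icc.preimage measurable_snd).inter
      (measurableSet_le (f := fun p : ℝ × ℝ ↦ p.1 ^ 2 + p.2 ^ 2) (by fun_prop) measurable_const))

lemma square_inter_closedBall_eq_preimage (s : ℝ) {r : ℝ} (hr : 0 ≤ r) :
    square s ∩ Metric.closedBall 0 r = euclideanFinTwoEquivProd ⁻¹' squareDisk (s / 2) r := by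
  ext u
  simp only [mem_inter_iff, Metric.mem_closedBall, dist_zero_right, mem_preimage,
    euclideanFinTwoEquivProd_apply, norm_le_iff_sq_add_sq_le hr, square, squareDisk, mem_ofPred_eq]
  tauto

lemma squareDisk_slice {a r x : ℝ} (hx : x ∈ Icc (-a) a) (hxr : x ^ 2 ≤ r ^ 2) :
    Prod.mk x ⁻¹' squareDisk a r = Icc (-min a √(r ^ 2 - x ^ 2)) (min a √(r ^ 2 - x ^ 2)) := by
  ext y
  have hdisk : x ^ 2 + y ^ 2 ≤ r ^ 2 ↔ |y| ≤ √(r ^ 2 - x ^ 2) := by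
    rw [Real.le_sqrt (abs_nonneg y) (sub_nonneg.2 hxr), sq_abs]
    constructor <;> intro <;> linarith
  simp only [mem_preimage, squareDisk, mem_ofPred_eq]
  rw [and_iff_right hx, hdisk, mem_Icc, mem_Icc, ← abs_le, ← abs_le, le_min_iff]

lemma volume_squareDisk {a r : ℝ} (ha : 0 ≤ a) (har : a ≤ r) :
    volume (squareDisk a r) =
      ENNReal.ofReal (∫ x in -a..a, 2 * min a √(r ^ 2 - x ^ 2)) := by
  have hslice : ∀ x, volume (Prod.mk x ⁻¹' squareDisk a r) =
      (Icc (-a) a).indicator (fun x ↦ ENNReal.ofReal (2 * min a √(r ^ 2 - x ^ 2))) x := by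
    intro x
    by_cases hx : x ∈ Icc (-a) a
    · have hxr : x ^ 2 ≤ r ^ 2 := sq_le_sq' (by linarith [hx.1]) (by linarith [hx.2])
      rw [squareDisk_slice hx hxr, indicator_of_mem hx, Real.volume_Icc]
      ring_nf
    · have hempty : Prod.mk x ⁻¹' squareDisk a r = ∅ :=
        eq_empty_of_forall_notMem fun y hy ↦ hx hy.1
      rw [hempty, indicator_of_notMem hx, measure_empty]
  rw [Measure.volume_eq_prod, Measure.prod_apply (measurableSet_squareDisk a r)]
  simp_rw [hslice]
  rw [lintegral_indicator measurableSet_Icc, ← ofReal_integral_eq_lintegral_ofReal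
    (by fun_prop : Continuous fun x : ℝ ↦ 2 * min a √(r ^ 2 - x ^ 2)).integrableOn_Icc
    (.of_forall fun x ↦ by positivity), intervalIntegral.integral_of_le (by linarith),
    integral_Icc_eq_integral_Ioc]

lemma hasDerivAt_sqrt_sq_sub_sq_primitive {r x : ℝ} (hx : |x| < r) :
    HasDerivAt (fun x ↦ (x * √(r ^ 2 - x ^ 2) + r ^ 2 * arcsin (x / r)) / 2)
      √(r ^ 2 - x ^ 2) x := by
  have hr : 0 < r := (abs_nonneg x).trans_lt hx
  have hpos : 0 < r ^ 2 - x ^ 2 := by nlinarith [sq_abs x, abs_nonneg x]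
  have hxr : |x / r| < 1 := by rwa [abs_div, abs_of_pos hr, div_lt_one hr]
  have hsqrt : HasDerivAt (fun x ↦ √(r ^ 2 - x ^ 2)) (-(2 * x) / (2 * √(r ^ 2 - x ^ 2))) x := by
    refine HasDerivAt.sqrt ?_ hpos.ne'
    simpa using (hasDerivAt_pow 2 x).const_sub (r ^ 2)
  have harcsin := (Real.hasDerivAt_arcsin (abs_lt.1 hxr).1.ne' (abs_lt.1 hxr).2.ne).comp x
    ((hasDerivAt_id x).div_const r)
  have hroot : √(1 - (x / r) ^ 2) = √(r ^ 2 - x ^ 2) / r := by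
    rw [show 1 - (x / r) ^ 2 = (r ^ 2 - x ^ 2) / r ^ 2 by field_simp, Real.sqrt_div hpos.le,
      Real.sqrt_sq hr.le]
  refine ((((hasDerivAt_id x).mul hsqrt).add (harcsin.const_mul (r ^ 2))).div_const 2).congr_deriv
    ?_
  rw [hroot]
  have hsq := Real.sq_sqrt hpos.le
  have hroot_pos := Real.sqrt_pos.2 hpos
  field_simp
  simp only [id]
  linear_combination -hsq

lemma integral_sqrt_sq_sub_sq {r a b : ℝ} (ha : -r ≤ a) (hab : a ≤ b) (hb : b ≤ r) :
    ∫ x in a..b, √(r ^ 2 - x ^ 2) =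
      (b * √(r ^ 2 - b ^ 2) + r ^ 2 * arcsin (b / r)) / 2 -
        (a * √(r ^ 2 - a ^ 2) + r ^ 2 * arcsin (a / r)) / 2 := by
  refine intervalIntegral.integral_eq_sub_of_hasDerivAt_of_le hab
    (f := fun x ↦ (x * √(r ^ 2 - x ^ 2) + r ^ 2 * arcsin (x / r)) / 2) (by fun_prop)
    (fun x hx ↦ ?_) ((by fun_prop : Continuous fun x : ℝ ↦ √(r ^ 2 - x ^ 2)).intervalIntegrable _ _)
  exact hasDerivAt_sqrt_sq_sub_sq_primitive (abs_lt.2 ⟨by linarith [hx.1], by linarith [hx.2]⟩)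

/-- The area of `[-a, a]² ∩ B(0, r)` for `a ≤ r ≤ √2 a`: the disk minus four circular segments. -/
noncomputable def squareDiskArea (a r : ℝ) : ℝ :=
  π * r ^ 2 - 4 * r ^ 2 * arccos (a / r) + 4 * a * √(r ^ 2 - a ^ 2)

lemma integral_two_mul_min_sqrt {a r : ℝ} (ha : 0 < a) (har : a ≤ r) (hr : r ^ 2 ≤ 2 * a ^ 2) :
    ∫ x in -a..a, 2 * min a √(r ^ 2 - x ^ 2) = squareDiskArea a r := by
  have hr0 : 0 < r := ha.trans_le har
  set c := √(r ^ 2 - a ^ 2) with hc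
  have hc0 : 0 ≤ c := Real.sqrt_nonneg _
  have hc2 : c ^ 2 = r ^ 2 - a ^ 2 := Real.sq_sqrt (by nlinarith)
  have hca : c ≤ a := Real.sqrt_le_iff.2 ⟨ha.le, by linarith⟩
  have hcr : √(r ^ 2 - c ^ 2) = a := by rw [hc2, sub_sub_cancel, Real.sqrt_sq ha.le]
  have hout : ∀ x, c ^ 2 ≤ x ^ 2 → 2 * min a √(r ^ 2 - x ^ 2) = 2 * √(r ^ 2 - x ^ 2) :=
    fun x hx ↦ by rw [min_eq_right (Real.sqrt_le_iff.2 ⟨ha.le, by linarith⟩)]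
  have hin : ∀ x, x ^ 2 ≤ c ^ 2 → 2 * min a √(r ^ 2 - x ^ 2) = 2 * a :=
    fun x hx ↦ by rw [min_eq_left (Real.le_sqrt ha.le (by nlinarith) |>.2 (by linarith))]
  have hint : ∀ u v : ℝ, IntervalIntegrable (fun x ↦ 2 * min a √(r ^ 2 - x ^ 2)) volume u v :=
    (by fun_prop : Continuous fun x : ℝ ↦ 2 * min a √(r ^ 2 - x ^ 2)).intervalIntegrable
  have hleft : ∫ x in -a..-c, 2 * min a √(r ^ 2 - x ^ 2) = ∫ x in -a..-c, 2 * √(r ^ 2 - x ^ 2) :=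
    intervalIntegral.integral_congr fun x hx ↦ by
      rw [uIcc_of_le (by linarith)] at hx
      exact hout x (by nlinarith [hx.2])
  have hmid : ∫ x in -c..c, 2 * min a √(r ^ 2 - x ^ 2) = ∫ _ in -c..c, 2 * a :=
    intervalIntegral.integral_congr fun x hx ↦ by
      rw [uIcc_of_le (by linarith)] at hx
      exact hin x (by nlinarith [hx.1, hx.2])
  have hright : ∫ x in c..a, 2 * min a √(r ^ 2 - x ^ 2) = ∫ x in c..a, 2 * √(r ^ 2 - x ^ 2) :=
    intervalIntegral.integral_congr fun x hx ↦ by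
      rw [uIcc_of_le hca] at hx
      exact hout x (by nlinarith [hx.1])
  have harcsin_c : arcsin (c / r) = arccos (a / r) := by
    rw [arccos_eq_arcsin (by positivity), show 1 - (a / r) ^ 2 = (r ^ 2 - a ^ 2) / r ^ 2 by
      field_simp, Real.sqrt_div (by nlinarith), Real.sqrt_sq hr0.le]
  rw [← intervalIntegral.integral_add_adjacent_intervals (hint _ (-c)) (hint _ _),
    ← intervalIntegral.integral_add_adjacent_intervals (hint (-c) c) (hint _ a), hleft, hmid,
    hright, intervalIntegral.integral_const, intervalIntegral.integral_const_mul,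
    intervalIntegral.integral_const_mul, integral_sqrt_sq_sub_sq (by linarith) (by linarith)
      (by linarith), integral_sqrt_sq_sub_sq (by linarith) hca (by linarith)]
  simp only [neg_sq, hcr, neg_div, arcsin_neg, ← hc, harcsin_c, smul_eq_mul]
  rw [arcsin_eq_pi_div_two_sub_arccos, squareDiskArea]
  ring

lemma hasDerivAt_squareDiskArea {a r : ℝ} (ha : 0 < a) (har : a < r) :
    HasDerivAt (squareDiskArea a) (2 * π * r - 8 * r * arccos (a / r)) r := by
  have hr : 0 < r := ha.trans har
  have hpos : 0 < r ^ 2 - a ^ 2 := by nlinarith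
  have hquot : a / r < 1 := (div_lt_one hr).2 har
  have harccos := (hasDerivAt_arccos (by linarith [div_pos ha hr]) hquot.ne).comp r
    ((hasDerivAt_const r a).div (hasDerivAt_id r) hr.ne')
  have hsqrt : HasDerivAt (fun x ↦ √(x ^ 2 - a ^ 2)) (2 * r / (2 * √(r ^ 2 - a ^ 2))) r := by
    refine HasDerivAt.sqrt ?_ hpos.ne'
    simpa using (hasDerivAt_pow 2 r).sub_const (a ^ 2)
  have hroot : √(1 - (a / r) ^ 2) = √(r ^ 2 - a ^ 2) / r := by
    rw [show 1 - (a / r) ^ 2 = (r ^ 2 - a ^ 2) / r ^ 2 by field_simp, Real.sqrt_div hpos.le,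
      Real.sqrt_sq hr.le]
  refine ((((hasDerivAt_pow 2 r).const_mul π).sub (((hasDerivAt_pow 2 r).const_mul 4).mul
    harccos)).add (hsqrt.const_mul (4 * a))).congr_deriv ?_
  rw [hroot, Function.comp_apply]
  have hroot_pos := Real.sqrt_pos.2 hpos
  field_simp
  ring

lemma continuousOn_squareDiskArea (a : ℝ) : ContinuousOn (squareDiskArea a) (Ioi 0) :=
  continuousOn_of_forall_continuousAt fun r hr ↦ by
    unfold squareDiskArea
    fun_prop (disch := exact ne_of_gt hr)

lemma gridCDF_of_nonpos (s : ℝ) {r : ℝ} (hr : r ≤ 0) : gridCDF s r = 0 := by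
  rw [gridCDF, measure_mono_null inter_subset_right (by simp [ENNReal.ofReal_eq_zero.2 hr]),
    ENNReal.toReal_zero, zero_div]

lemma gridCDF_of_le_half {s r : ℝ} (hr0 : 0 ≤ r) (hr : r ≤ s / 2) :
    gridCDF s r = π * r ^ 2 / s ^ 2 := by
  rw [gridCDF, inter_eq_right.2 (closedBall_subset_square hr),
    EuclideanSpace.volume_closedBall_fin_two, ENNReal.toReal_mul, ENNReal.toReal_pow,
    ENNReal.toReal_ofReal hr0, ENNReal.toReal_ofReal pi_pos.le, mul_comm]

lemma gridCDF_of_mem_Icc {s r : ℝ} (hs : 0 < s) (hr : r ∈ Icc (s / 2) (s / √2)) :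
    gridCDF s r = squareDiskArea (s / 2) r / s ^ 2 := by
  have hr0 : 0 ≤ r := by linarith [hr.1]
  have hr2 : r ^ 2 ≤ 2 * (s / 2) ^ 2 := by
    have h := pow_le_pow_left₀ hr0 hr.2 2
    rw [div_sqrt_two_sq] at h
    linarith
  rw [gridCDF, square_inter_closedBall_eq_preimage s hr0,
    measurePreserving_euclideanFinTwoEquivProd.measure_preimage
      (measurableSet_squareDisk _ _).nullMeasurableSet,
    volume_squareDisk (by linarith) hr.1, ENNReal.toReal_ofReal
      (intervalIntegral.integral_nonneg (by linarith) fun x _ ↦ by positivity),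
    integral_two_mul_min_sqrt (by linarith) hr.1 hr2]

lemma gridCDF_of_div_sqrt_two_le {s r : ℝ} (hs : 0 < s) (hr : s / √2 ≤ r) : gridCDF s r = 1 := by
  rw [gridCDF, inter_eq_left.2 (square_subset_closedBall hs.le hr), volume_square hs.le,
    ENNReal.toReal_ofReal (by positivity), div_self (by positivity)]

lemma hasDerivAt_gridCDF_of_lt_half {s r : ℝ} (hr : r ∈ Ioo 0 (s / 2)) :
    HasDerivAt (gridCDF s) (2 * π * r / s ^ 2) r := by
  have h : HasDerivAt (fun x ↦ π * x ^ 2 / s ^ 2) (2 * π * r / s ^ 2) r :=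
    (((hasDerivAt_pow 2 r).const_mul π).div_const (s ^ 2)).congr_deriv (by push_cast; ring)
  exact h.congr_of_eventuallyEq (Filter.eventually_of_mem (isOpen_Ioo.mem_nhds hr)
    fun x hx ↦ gridCDF_of_le_half hx.1.le hx.2.le)

lemma hasDerivAt_gridCDF_of_half_lt {s r : ℝ} (hs : 0 < s) (hr : r ∈ Ioo (s / 2) (s / √2)) :
    HasDerivAt (gridCDF s) (2 * π * r / s ^ 2 - 8 * r / s ^ 2 * arccos (s / (2 * r))) r := by
  have h := (hasDerivAt_squareDiskArea (by positivity) hr.1).div_const (s ^ 2)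
  refine (h.congr_deriv (by rw [div_div]; ring)).congr_of_eventuallyEq (Filter.eventually_of_mem
    (isOpen_Ioo.mem_nhds hr) fun x hx ↦ gridCDF_of_mem_Icc hs (Ioo_subset_Icc_self hx))

lemma gridPDF_of_le_half {s t : ℝ} (ht0 : 0 ≤ t) (ht : t ≤ s / 2) :
    gridPDF s t = 2 * π * t / s ^ 2 :=
  if_pos ⟨ht0, ht⟩

lemma gridPDF_of_nonpos {s t : ℝ} (hs : 0 < s) (ht : t ≤ 0) : gridPDF s t = 0 := by
  rcases ht.lt_or_eq with ht | rfl
  · rw [gridPDF, if_neg fun h ↦ by linarith [h.1], if_neg fun h ↦ by linarith [h.1]]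
  · rw [gridPDF_of_le_half le_rfl (by positivity), mul_zero, zero_div]

lemma gridPDF_of_mem_Icc {s t : ℝ} (hs : 0 < s) (ht : t ∈ Icc (s / 2) (s / √2)) :
    gridPDF s t = 2 * π * t / s ^ 2 - 8 * t / s ^ 2 * arccos (s / (2 * t)) := by
  rcases ht.1.eq_or_lt with rfl | h
  · rw [gridPDF_of_le_half (by positivity) le_rfl, mul_div_cancel₀ s two_ne_zero, div_self hs.ne',
      arccos_one, mul_zero, sub_zero]
  · rw [gridPDF, if_neg fun h' ↦ by linarith [h'.2], if_pos ⟨h, ht.2⟩]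

lemma gridPDF_of_div_sqrt_two_le {s t : ℝ} (hs : 0 < s) (ht : s / √2 ≤ t) : gridPDF s t = 0 := by
  have hhalf := half_lt_div_sqrt_two hs
  rcases ht.eq_or_lt with rfl | h
  · have hquot : s / (2 * (s / √2)) = cos (π / 4) := by
      rw [cos_pi_div_four]
      field_simp
    rw [gridPDF_of_mem_Icc hs ⟨hhalf.le, le_rfl⟩, hquot,
      arccos_cos (by positivity) (by linarith [pi_pos])]
    ring
  · rw [gridPDF, if_neg fun h' ↦ by linarith [h'.2], if_neg fun h' ↦ by linarith [h'.2]]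

lemma continuous_of_continuousOn_Iic_Icc_Icc_Ici {β : Type*} [TopologicalSpace β] {f : ℝ → β}
    {a b c : ℝ} (hab : a ≤ b) (hbc : b ≤ c) (h₁ : ContinuousOn f (Iic a))
    (h₂ : ContinuousOn f (Icc a b)) (h₃ : ContinuousOn f (Icc b c)) (h₄ : ContinuousOn f (Ici c)) :
    Continuous f := by
  have h := (((h₁.union_of_isClosed h₂ isClosed_Iic isClosed_Icc).union_of_isClosed h₃
    (isClosed_Iic.union isClosed_Icc) isClosed_Icc).union_of_isClosed h₄
    ((isClosed_Iic.union isClosed_Icc).union isClosed_Icc) isClosed_Ici)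
  rwa [Iic_union_Icc_eq_Iic hab, Iic_union_Icc_eq_Iic hbc, Iic_union_Ici,
    continuousOn_univ] at h

lemma continuous_gridCDF {s : ℝ} (hs : 0 < s) : Continuous (gridCDF s) := by
  have hhalf := half_lt_div_sqrt_two hs
  refine continuous_of_continuousOn_Iic_Icc_Icc_Ici (by positivity) hhalf.le
    (continuousOn_const.congr fun r hr ↦ gridCDF_of_nonpos s hr)
    ((by fun_prop : Continuous fun r ↦ π * r ^ 2 / s ^ 2).continuousOn.congr
      fun r hr ↦ gridCDF_of_le_half hr.1 hr.2)
    (((continuousOn_squareDiskArea _).mono fun r hr ↦ ?_).div_const _ |>.congr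
      fun r hr ↦ gridCDF_of_mem_Icc hs hr)
    (continuousOn_const.congr fun r hr ↦ gridCDF_of_div_sqrt_two_le hs hr)
  exact lt_of_lt_of_le (by positivity) hr.1

lemma continuous_gridPDF {s : ℝ} (hs : 0 < s) : Continuous (gridPDF s) := by
  have hhalf := half_lt_div_sqrt_two hs
  have hmid : ContinuousOn (fun t ↦ 2 * π * t / s ^ 2 - 8 * t / s ^ 2 * arccos (s / (2 * t)))
      (Icc (s / 2) (s / √2)) :=
    continuousOn_of_forall_continuousAt fun t ht ↦ by
      have ht0 : 2 * t ≠ 0 := by linarith [ht.1]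
      fun_prop (disch := assumption)
  exact continuous_of_continuousOn_Iic_Icc_Icc_Ici (by positivity) hhalf.le
    (continuousOn_const.congr fun t ht ↦ gridPDF_of_nonpos hs ht)
    ((by fun_prop : Continuous fun t ↦ 2 * π * t / s ^ 2).continuousOn.congr
      fun t ht ↦ gridPDF_of_le_half ht.1 ht.2)
    (hmid.congr fun t ht ↦ gridPDF_of_mem_Icc hs ht)
    (continuousOn_const.congr fun t ht ↦ gridPDF_of_div_sqrt_two_le hs ht)

lemma hasDerivAt_gridCDF {s r : ℝ} (hs : 0 < s) (hr : r ∉ ({0, s / 2, s / √2} : Set ℝ)) :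
    HasDerivAt (gridCDF s) (gridPDF s r) r := by
  simp only [mem_insert_iff, mem_singleton_iff, not_or] at hr
  obtain ⟨h0, h1, h2⟩ := hr
  rcases Ne.lt_or_gt h0 with hneg | hpos
  · rw [gridPDF_of_nonpos hs hneg.le]
    exact (hasDerivAt_const r 0).congr_of_eventuallyEq
      (Filter.eventually_of_mem (Iio_mem_nhds hneg) fun x hx ↦ gridCDF_of_nonpos s hx.le)
  rcases Ne.lt_or_gt h1 with hlow | hmid
  · rw [gridPDF_of_le_half hpos.le hlow.le]
    exact hasDerivAt_gridCDF_of_lt_half ⟨hpos, hlow⟩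
  rcases Ne.lt_or_gt h2 with hmid' | hhigh
  · rw [gridPDF_of_mem_Icc hs ⟨hmid.le, hmid'.le⟩]
    exact hasDerivAt_gridCDF_of_half_lt hs ⟨hmid, hmid'⟩
  · rw [gridPDF_of_div_sqrt_two_le hs hhigh.le]
    exact (hasDerivAt_const r 1).congr_of_eventuallyEq
      (Filter.eventually_of_mem (Ioi_mem_nhds hhigh) fun x hx ↦ gridCDF_of_div_sqrt_two_le hs hx.le)

lemma integral_Iic_gridPDF {s : ℝ} (hs : 0 < s) (r : ℝ) :
    ∫ t in Iic r, gridPDF s t = gridCDF s r := by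
  set a := min r 0
  have ha : a ≤ 0 := min_le_right _ _
  have hzero : EqOn (gridPDF s) 0 (Iic a) := fun t ht ↦ gridPDF_of_nonpos hs (ht.trans ha)
  have hFTC : ∫ t in a..r, gridPDF s t = gridCDF s r - gridCDF s a :=
    integral_eq_of_hasDerivAt_off_countable_of_le _ _ (min_le_left _ _) (toFinite _).countable
      (continuous_gridCDF hs).continuousOn (fun t ht ↦ hasDerivAt_gridCDF hs ht.2)
      ((continuous_gridPDF hs).intervalIntegrable _ _)
  rw [← Iic_union_Ioc_eq_Iic (min_le_left r 0), setIntegral_union (Iic_disjoint_Ioc le_rfl)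
    measurableSet_Ioc (integrableOn_zero.congr_fun hzero.symm measurableSet_Iic)
    (continuous_gridPDF hs).integrableOn_Ioc, setIntegral_eq_zero_of_forall_eq_zero hzero,
    ← intervalIntegral.integral_of_le (min_le_left _ _), hFTC, gridCDF_of_nonpos s ha]
  ring

lemma abs_le_abs_mul_intCast_add {s z : ℝ} (hz : |z| ≤ s / 2) (k : ℤ) : |z| ≤ |s * k + z| := by
  rcases eq_or_ne k 0 with rfl | hk
  · simp
  have hsk : |s| ≤ |s * k| := by
    rw [abs_mul]
    exact le_mul_of_one_le_right (abs_nonneg s) (by exact_mod_cast Int.one_le_abs hk)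
  have htri := abs_sub (s * k + z) z
  rw [add_sub_cancel_right] at htri
  linarith [le_abs_self s]

lemma iInf_norm_gridPt_add {s : ℝ} {u : EuclideanSpace ℝ (Fin 2)} (hu : u ∈ square s) :
    ⨅ k : ℤ × ℤ, ‖gridPt s k + u‖ = ‖u‖ := by
  have hbdd : BddBelow (Set.range fun k : ℤ × ℤ ↦ ‖gridPt s k + u‖) :=
    ⟨0, by rintro _ ⟨k, rfl⟩; exact norm_nonneg _⟩
  refine le_antisymm ((ciInf_le hbdd (0, 0)).trans_eq ?_) (le_ciInf fun k ↦ ?_)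
  · have hzero : gridPt s (0, 0) = 0 := by ext i; fin_cases i <;> simp [gridPt]
    rw [hzero, zero_add]
  · rw [← sq_le_sq₀ (norm_nonneg _) (norm_nonneg _), EuclideanSpace.real_norm_sq_eq,
      EuclideanSpace.real_norm_sq_eq, Fin.sum_univ_two, Fin.sum_univ_two]
    exact add_le_add (sq_le_sq.2 (abs_le_abs_mul_intCast_add (abs_le.2 hu.1) k.1))
      (sq_le_sq.2 (abs_le_abs_mul_intCast_add (abs_le.2 hu.2) k.2))

lemma measure_iInf_norm_gridPt_add_le {Ω : Type*} [MeasurableSpace Ω] {P : Measure Ω}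
    {U : Ω → EuclideanSpace ℝ (Fin 2)} {s : ℝ} (hs : 0 < s)
    (hU : pdf.IsUniform U (square s) P) (r : ℝ) :
    P {ω | ⨅ k : ℤ × ℤ, ‖gridPt s k + U ω‖ ≤ r} = ENNReal.ofReal (gridCDF s r) := by
  have hvol := volume_square hs.le
  have hvol₀ : volume (square s) ≠ 0 := by rw [hvol]; positivity
  have hvol_top : volume (square s) ≠ ⊤ := by rw [hvol]; exact ENNReal.ofReal_ne_top
  have hmem : ∀ᵐ ω ∂P, U ω ∈ square s := by
    have hout := hU.measure_preimage hvol₀ hvol_top (measurableSet_square s).compl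
    rw [inter_compl_self, measure_empty, ENNReal.zero_div] at hout
    exact measure_eq_zero_iff_ae_notMem.1 hout |>.mono fun ω h ↦ not_not.1 h
  calc P {ω | ⨅ k : ℤ × ℤ, ‖gridPt s k + U ω‖ ≤ r}
      = P (U ⁻¹' Metric.closedBall 0 r) := measure_congr <| hmem.mono fun ω hω ↦ by
        change (_ ≤ r) = (U ω ∈ Metric.closedBall 0 r)
        rw [iInf_norm_gridPt_add hω, mem_closedBall_zero_iff]
    _ = volume (square s ∩ Metric.closedBall 0 r) / volume (square s) :=
        hU.measure_preimage hvol₀ hvol_top Metric.isClosed_closedBall.measurableSet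
    _ = ENNReal.ofReal (gridCDF s r) := by
        rw [gridCDF, ENNReal.ofReal_div_of_pos (by positivity), ← hvol,
          ENNReal.ofReal_toReal (measure_ne_top_of_subset inter_subset_left hvol_top)]

/-- the CDF `F(r) = ν₂(S₀(s) ∩ B(0,r))/s²` is differentiable with derivative
`2πr/s²` on `(0, s/2)` and `2πr/s² − (8r/s²)·arccos(s/(2r))` on `(s/2, s/√2)`; in particular
the nearest grid distance `R_g` has probability density `f_{R_g} = gridPDF s`. -/
theorem deriv_gridCDF (s : ℝ) (hs : 0 < s) :
    (∀ r ∈ Set.Ioo 0 (s / 2), HasDerivAt (gridCDF s) (2 * π * r / s ^ 2) r) ∧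
    (∀ r ∈ Set.Ioo (s / 2) (s / Real.sqrt 2),
      HasDerivAt (gridCDF s)
        (2 * π * r / s ^ 2 - 8 * r / s ^ 2 * Real.arccos (s / (2 * r))) r) ∧
    (∀ {Ω : Type} [MeasurableSpace Ω] (P : Measure Ω), IsProbabilityMeasure P →
      ∀ (U : Ω → EuclideanSpace ℝ (Fin 2)),
        Measure.map U P = (volume (square s))⁻¹ • volume.restrict (square s) →
        ∀ (Rg : Ω → ℝ), (∀ ω, Rg ω = ⨅ k : ℤ × ℤ, ‖gridPt s k + U ω‖) →
        ∀ r : ℝ, P {ω | Rg ω ≤ r} = ENNReal.ofReal (∫ t in Set.Iic r, gridPDF s t)) := by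
  refine ⟨fun r hr ↦ hasDerivAt_gridCDF_of_lt_half hr,
    fun r hr ↦ hasDerivAt_gridCDF_of_half_lt hs hr, ?_⟩
  -- `hU` is `pdf.IsUniform U (square s) P` unfolded
  intro Ω _ P _ U hU Rg hRg r
  simp only [hRg]
  rw [integral_Iic_gridPDF hs, measure_iInf_norm_gridPt_add_le hs hU]
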